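/- arXiv:1802.02850 — 3 statements merged into one kernel-verified Lean document; each statement's English description precedes it below -/
import Mathlib

section
/- (Theorem 1, dominance of the uniform-on-conditional-type-classes attack.) Let A be a nonempty finite set, n ≥ 1, and let d_n : A^n × A^n → ℝ be nonnegative and permutation-invariant. Let P_0, P_1 be PMFs on A, let Δ_0, Δ_1 ≥ 0, let γ, β ≥ 0, and let Φ : A^n → [0,1] be permutation-invariant. Then for every channel A_0 ∈ C_{Δ_0} and every channel A_1 ∈ C_{Δ_1}, γ·P_FN(Φ,A_1) + β·P_FP(Φ,A_0) ≤ (n+1)^{|A|·(|A|−1)} · ( γ·P_FN(Φ,A*_{Δ_1}) + β·P_FP(Φ,A*_{Δ_0}) ), where A*_{Δ_0}, A*_{Δ_1} are the channels defined below. -/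
open scoped Classical
open Finset Filter

noncomputable section

/-- A probability mass function on a finite alphabet, as a real-valued function. -/
def IsPMF {A : Type} [Fintype A] (P : A → ℝ) : Prop :=
  (∀ a, 0 ≤ P a) ∧ ∑ a, P a = 1

/-- Kullback--Leibler divergence `D(Q‖P) = ∑_{a : Q a > 0} Q a · ln (Q a / P a)`. -/
def klDiv {A : Type} [Fintype A] (Q P : A → ℝ) : ℝ :=
  ∑ a, if 0 < Q a then Q a * Real.log (Q a / P a) else 0

/-- First marginal of a joint PMF on `A × A`. -/
def margX {A : Type} [Fintype A] (Q : A × A → ℝ) : A → ℝ := fun a => ∑ b, Q (a, b)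

/-- Second marginal of a joint PMF on `A × A`. -/
def margY {A : Type} [Fintype A] (Q : A × A → ℝ) : A → ℝ := fun b => ∑ a, Q (a, b)

/-- Expected distortion of a joint PMF. -/
def expDist {A : Type} [Fintype A] (d : A → A → ℝ) (Q : A × A → ℝ) : ℝ :=
  ∑ q : A × A, Q q * d q.1 q.2

/-- Generalized divergence `D̃_Δ(P_Y, P)`: minimum of `D(Q_X‖P)` over joint PMFs `Q`
with second marginal `P_Y` and expected distortion at most `Δ`. -/
def Dtilde {A : Type} [Fintype A] (d : A → A → ℝ) (Δ : ℝ) (PY P : A → ℝ) : ℝ :=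
  sInf {v | ∃ Q : A × A → ℝ,
    IsPMF Q ∧ margY Q = PY ∧ expDist d Q ≤ Δ ∧ v = klDiv (margX Q) P}

/-- Earth mover distance between two PMFs. -/
def EMD {A : Type} [Fintype A] (d : A → A → ℝ) (P P' : A → ℝ) : ℝ :=
  sInf {v | ∃ R : A × A → ℝ,
    IsPMF R ∧ margX R = P ∧ margY R = P' ∧ v = expDist d R}

/-- Memoryless (product) probability of a sequence. -/
def seqProb {A : Type} {n : ℕ} (P : A → ℝ) (x : Fin n → A) : ℝ := ∏ i, P (x i)

/-- Additive extension of a per-letter distortion to sequences. -/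
def dSeq {A : Type} {n : ℕ} (d : A → A → ℝ) (x y : Fin n → A) : ℝ := ∑ i, d (x i) (y i)

/-- Empirical PMF (type) of a sequence. -/
def empP {A : Type} [Fintype A] [DecidableEq A] {n : ℕ} (x : Fin n → A) : A → ℝ :=
  fun a => ((univ.filter fun i => x i = a).card : ℝ) / (n : ℝ)

/-- Empirical entropy of a sequence. -/
def empEnt {A : Type} [Fintype A] [DecidableEq A] {n : ℕ} (y : Fin n → A) : ℝ :=
  -∑ a, if 0 < empP y a then empP y a * Real.log (empP y a) else 0

/-- Conditional type class `T(y|x)`. -/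
def condTypeClass {A : Type} [Fintype A] [DecidableEq A] {n : ℕ} (x y : Fin n → A) :
    Finset (Fin n → A) :=
  univ.filter fun y' => ∀ a b : A,
    (univ.filter fun i => x i = a ∧ y' i = b).card
      = (univ.filter fun i => x i = a ∧ y i = b).card

/-- Number of distinct conditional type classes `T(y|x)` arising from `y` with
`dn x y ≤ n·Δ`. -/
def numCondTypes {A : Type} [Fintype A] [DecidableEq A] {n : ℕ}
    (dn : (Fin n → A) → (Fin n → A) → ℝ) (Δ : ℝ) (x : Fin n → A) : ℕ :=
  ((univ.filter fun y => dn x y ≤ (n : ℝ) * Δ).image fun y => condTypeClass x y).card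

/-- The optimal attack channel `A*_Δ(y|x) = c_n(x)/|T(y|x)|` on admissible `y`,
and `0` otherwise; here `c_n(x)` is the reciprocal of the number of admissible
conditional type classes. -/
def Astar {A : Type} [Fintype A] [DecidableEq A] {n : ℕ}
    (dn : (Fin n → A) → (Fin n → A) → ℝ) (Δ : ℝ) (x y : Fin n → A) : ℝ :=
  if dn x y ≤ (n : ℝ) * Δ then
    ((numCondTypes dn Δ x : ℝ))⁻¹ / ((condTypeClass x y).card : ℝ)
  else 0

/-- A channel on `A^n`: `W x y` is the conditional probability of output `y` given input `x`. -/
def IsChannel {A : Type} [Fintype A] {n : ℕ}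
    (W : (Fin n → A) → (Fin n → A) → ℝ) : Prop :=
  (∀ x y, 0 ≤ W x y) ∧ ∀ x, ∑ y, W x y = 1

/-- The class `C_Δ` of admissible channels: those assigning zero probability to any
`y` with `dn x y > n·Δ`. -/
def InC {A : Type} [Fintype A] {n : ℕ}
    (dn : (Fin n → A) → (Fin n → A) → ℝ) (Δ : ℝ)
    (W : (Fin n → A) → (Fin n → A) → ℝ) : Prop :=
  IsChannel W ∧ ∀ x y, (n : ℝ) * Δ < dn x y → W x y = 0

/-- False positive probability: `Φ y` is the probability of deciding `H₁` given `y`. -/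
def PFP {A : Type} [Fintype A] {n : ℕ} (P0 : A → ℝ) (Φ : (Fin n → A) → ℝ)
    (A0 : (Fin n → A) → (Fin n → A) → ℝ) : ℝ :=
  ∑ x, ∑ y, seqProb P0 x * A0 x y * Φ y

/-- False negative probability. -/
def PFN {A : Type} [Fintype A] {n : ℕ} (P1 : A → ℝ) (Φ : (Fin n → A) → ℝ)
    (A1 : (Fin n → A) → (Fin n → A) → ℝ) : ℝ :=
  ∑ x, ∑ y, seqProb P1 x * A1 x y * (1 - Φ y)

/-- Sequence-level generalized divergence
`D̃ⁿ_Δ(y,P) = min_{x : d(x,y) ≤ nΔ} D(P̂_x‖P)`. -/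
def DtildeN {A : Type} [Fintype A] [DecidableEq A] {n : ℕ} (d : A → A → ℝ) (Δ : ℝ)
    (y : Fin n → A) (P : A → ℝ) : ℝ :=
  sInf {v | ∃ x : Fin n → A, dSeq d x y ≤ (n : ℝ) * Δ ∧ v = klDiv (empP x) P}

/-!
Fix the input `x`. A channel in `C_Δ` puts all of its mass on admissible outputs `y`, so the
conditional expectation of a test function `g ≥ 0` under it is at most `g y` for some admissible
`y`. When `d_n` and `g` are permutation-invariant, every `y'` in the class `T(y|x)` is admissible
and has `g y' = g y`; since `A*_Δ` spreads mass `c_n(x)` uniformly over that class,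
`g y ≤ c_n(x)⁻¹ · E_{A*_Δ}[g]`. Finally, `c_n(x)⁻¹ ≤ (n+1)^{|A|(|A|-1)}`: a conditional type is
determined by the joint counts `N(a,b)` with `b ≠ b₀`, each in `{0,…,n}`, because each row of
counts sums to the number of occurrences of `a` in `x`.
-/

theorem exists_perm_comp_eq_of_card_fiber_eq {ι C : Type*} [Fintype ι] [DecidableEq C]
    {f g : ι → C} (h : ∀ c, #{i | f i = c} = #{i | g i = c}) :
    ∃ π : Equiv.Perm ι, f ∘ π = g := by
  have hcard : ∀ c, Fintype.card {i // g i = c} = Fintype.card {i // f i = c} := fun c => by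
    simp only [Fintype.card_subtype, h]
  exact ⟨Equiv.ofFiberEquiv fun c => Fintype.equivOfCardEq (hcard c),
    funext (Equiv.ofFiberEquiv_map _)⟩

theorem eq_of_sum_eq_of_forall_ne {ι M : Type*} [Fintype ι] [DecidableEq ι]
    [AddCancelCommMonoid M] {f g : ι → M} (hsum : ∑ i, f i = ∑ i, g i) (i₀ : ι)
    (hne : ∀ i, i ≠ i₀ → f i = g i) : f = g := by
  funext i
  by_cases hi : i = i₀
  · subst hi
    rw [← add_sum_erase _ _ (mem_univ i), ← add_sum_erase _ g (mem_univ i),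
      sum_congr rfl fun j hj => hne j (ne_of_mem_erase hj)] at hsum
    exact add_right_cancel hsum
  · exact hne i hi

section ConditionalTypes

variable {A : Type} [Fintype A] [DecidableEq A] {n : ℕ}

def jointCount (x y : Fin n → A) (p : A × A) : ℕ := #{i | (x i, y i) = p}

theorem mem_condTypeClass_iff {x y y' : Fin n → A} :
    y' ∈ condTypeClass x y ↔ jointCount x y' = jointCount x y := by
  simp only [condTypeClass, jointCount, mem_filter, mem_univ, true_and, funext_iff,
    Prod.forall, Prod.mk.injEq]

theorem self_mem_condTypeClass (x y : Fin n → A) : y ∈ condTypeClass x y :=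
  mem_condTypeClass_iff.2 rfl

theorem condTypeClass_eq_of_mem {x y y' : Fin n → A} (h : y' ∈ condTypeClass x y) :
    condTypeClass x y' = condTypeClass x y := by
  ext z
  rw [mem_condTypeClass_iff, mem_condTypeClass_iff, mem_condTypeClass_iff.1 h]

theorem exists_perm_of_mem_condTypeClass {x y y' : Fin n → A} (h : y' ∈ condTypeClass x y) :
    ∃ π : Equiv.Perm (Fin n), x ∘ π = x ∧ y ∘ π = y' := by
  obtain ⟨π, hπ⟩ := exists_perm_comp_eq_of_card_fiber_eq (f := fun i => (x i, y i))
    (g := fun i => (x i, y' i)) fun p => (congrFun (mem_condTypeClass_iff.1 h) p).symm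
  exact ⟨π, funext fun i => congrArg Prod.fst (congrFun hπ i),
    funext fun i => congrArg Prod.snd (congrFun hπ i)⟩

theorem apply_eq_of_mem_condTypeClass {β : Type*} {f : (Fin n → A) → (Fin n → A) → β}
    (hf : ∀ (π : Equiv.Perm (Fin n)) (x y : Fin n → A), f (x ∘ π) (y ∘ π) = f x y)
    {x y y' : Fin n → A} (h : y' ∈ condTypeClass x y) : f x y' = f x y := by
  obtain ⟨π, hx, rfl⟩ := exists_perm_of_mem_condTypeClass h
  conv_lhs => rw [← hx]
  exact hf π x y

theorem sum_jointCount_row (x y : Fin n → A) (a : A) :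
    ∑ b, jointCount x y (a, b) = #{i | x i = a} := by
  rw [card_eq_sum_card_fiberwise (f := y) (t := univ) fun _ _ => mem_univ _]
  refine sum_congr rfl fun b _ => ?_
  simp only [jointCount, filter_filter, Prod.mk.injEq]

theorem card_image_jointCount_le [Nonempty A] (x : Fin n → A) (s : Finset (Fin n → A)) :
    #(s.image (jointCount x)) ≤ (n + 1) ^ (Fintype.card A * (Fintype.card A - 1)) := by
  obtain ⟨b₀⟩ := ‹Nonempty A›
  let restrict : (A × A → ℕ) → A × {b // b ≠ b₀} → ℕ := fun c q => c (q.1, q.2)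
  have hmaps : ∀ c ∈ s.image (jointCount x),
      restrict c ∈ Fintype.piFinset fun _ => range (n + 1) := by
    simp only [mem_image, Fintype.mem_piFinset, mem_range]
    rintro _ ⟨y, -, rfl⟩ q
    exact Nat.lt_succ_of_le ((card_filter_le _ _).trans (by simp))
  have hinj : Set.InjOn restrict (s.image (jointCount x)) := by
    simp only [coe_image]
    rintro _ ⟨y, -, rfl⟩ _ ⟨y', -, rfl⟩ h
    funext ⟨a, b⟩
    have hrow := eq_of_sum_eq_of_forall_ne (f := fun b => jointCount x y (a, b))
      (g := fun b => jointCount x y' (a, b)) (by simp only [sum_jointCount_row]) b₀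
      fun b hb => congrFun h (a, ⟨b, hb⟩)
    exact congrFun hrow b
  calc #(s.image (jointCount x))
      ≤ #(Fintype.piFinset fun _ : A × {b // b ≠ b₀} => range (n + 1)) :=
        card_le_card_of_injOn restrict hmaps hinj
    _ = (n + 1) ^ (Fintype.card A * (Fintype.card A - 1)) := by
        simp [Fintype.card_subtype_compl]

theorem numCondTypes_le [Nonempty A] (dn : (Fin n → A) → (Fin n → A) → ℝ) (Δ : ℝ)
    (x : Fin n → A) :
    numCondTypes dn Δ x ≤ (n + 1) ^ (Fintype.card A * (Fintype.card A - 1)) := by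
  have hfactor : condTypeClass x
      = (fun c => ({y' | jointCount x y' = c} : Finset (Fin n → A))) ∘ jointCount x := by
    funext y
    ext y'
    simp [mem_condTypeClass_iff]
  rw [numCondTypes, hfactor, ← image_image]
  exact card_image_le.trans (card_image_jointCount_le x _)

theorem numCondTypes_pos {dn : (Fin n → A) → (Fin n → A) → ℝ} {Δ : ℝ} {x y : Fin n → A}
    (hy : dn x y ≤ n * Δ) : 0 < numCondTypes dn Δ x :=
  card_pos.2 ⟨_, mem_image_of_mem _ (mem_filter.2 ⟨mem_univ y, hy⟩)⟩

end ConditionalTypes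

theorem sum_mul_le_of_InC {A : Type} [Fintype A] {n : ℕ}
    {dn : (Fin n → A) → (Fin n → A) → ℝ} {Δ : ℝ} {W : (Fin n → A) → (Fin n → A) → ℝ}
    (hW : InC dn Δ W) {g : (Fin n → A) → ℝ} {M : ℝ} (x : Fin n → A)
    (hM : ∀ y, dn x y ≤ n * Δ → g y ≤ M) :
    ∑ y, W x y * g y ≤ M :=
  calc ∑ y, W x y * g y ≤ ∑ y, W x y * M := sum_le_sum fun y _ => by
        by_cases hy : dn x y ≤ n * Δ
        · exact mul_le_mul_of_nonneg_left (hM y hy) (hW.1.1 x y)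
        · rw [hW.2 x y (not_le.1 hy), zero_mul, zero_mul]
    _ = M := by rw [← sum_mul, hW.1.2 x, one_mul]

theorem seqProb_nonneg {A : Type} [Fintype A] {n : ℕ} {P : A → ℝ} (hP : IsPMF P)
    (x : Fin n → A) : 0 ≤ seqProb P x :=
  prod_nonneg fun i _ => hP.1 (x i)

section Attack

variable {A : Type} [Fintype A] [DecidableEq A] {n : ℕ}
  {dn : (Fin n → A) → (Fin n → A) → ℝ} {Δ : ℝ}

theorem Astar_nonneg (x y : Fin n → A) : 0 ≤ Astar dn Δ x y := by
  unfold Astar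
  split_ifs <;> positivity

theorem sum_condTypeClass_Astar_mul
    (hdperm : ∀ (π : Equiv.Perm (Fin n)) (x y : Fin n → A), dn (x ∘ π) (y ∘ π) = dn x y)
    {g : (Fin n → A) → ℝ} (hg : ∀ (π : Equiv.Perm (Fin n)) (y : Fin n → A), g (y ∘ π) = g y)
    {x y : Fin n → A} (hy : dn x y ≤ n * Δ) :
    ∑ y' ∈ condTypeClass x y, Astar dn Δ x y' * g y' = (numCondTypes dn Δ x : ℝ)⁻¹ * g y := by
  have hT : (#(condTypeClass x y) : ℝ) ≠ 0 :=
    Nat.cast_ne_zero.2 (card_ne_zero_of_mem (self_mem_condTypeClass x y))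
  have hterm : ∀ y' ∈ condTypeClass x y, Astar dn Δ x y' * g y'
      = (numCondTypes dn Δ x : ℝ)⁻¹ / #(condTypeClass x y) * g y := by
    intro y' hy'
    have hd : dn x y' = dn x y := apply_eq_of_mem_condTypeClass hdperm hy'
    rw [Astar, if_pos (hd ▸ hy), condTypeClass_eq_of_mem hy',
      apply_eq_of_mem_condTypeClass (f := fun _ y => g y) (fun π _ y => hg π y) hy']
  rw [sum_congr rfl hterm, sum_const, nsmul_eq_mul]
  field_simp

theorem le_numCondTypes_mul_sum_Astar_mul
    (hdperm : ∀ (π : Equiv.Perm (Fin n)) (x y : Fin n → A), dn (x ∘ π) (y ∘ π) = dn x y)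
    {g : (Fin n → A) → ℝ} (hg0 : ∀ y, 0 ≤ g y)
    (hg : ∀ (π : Equiv.Perm (Fin n)) (y : Fin n → A), g (y ∘ π) = g y)
    {x y : Fin n → A} (hy : dn x y ≤ n * Δ) :
    g y ≤ numCondTypes dn Δ x * ∑ y', Astar dn Δ x y' * g y' := by
  have hm : (numCondTypes dn Δ x : ℝ) ≠ 0 := Nat.cast_ne_zero.2 (numCondTypes_pos hy).ne'
  calc g y = numCondTypes dn Δ x * ∑ y' ∈ condTypeClass x y, Astar dn Δ x y' * g y' := by
        rw [sum_condTypeClass_Astar_mul hdperm hg hy]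
        field_simp
    _ ≤ numCondTypes dn Δ x * ∑ y', Astar dn Δ x y' * g y' :=
        mul_le_mul_of_nonneg_left (sum_le_sum_of_subset_of_nonneg (subset_univ _)
          fun y' _ _ => mul_nonneg (Astar_nonneg x y') (hg0 y')) (Nat.cast_nonneg _)

theorem sum_mul_le_pow_mul_sum_Astar_mul [Nonempty A]
    (hdperm : ∀ (π : Equiv.Perm (Fin n)) (x y : Fin n → A), dn (x ∘ π) (y ∘ π) = dn x y)
    {W : (Fin n → A) → (Fin n → A) → ℝ} (hW : InC dn Δ W)
    {g : (Fin n → A) → ℝ} (hg0 : ∀ y, 0 ≤ g y)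
    (hg : ∀ (π : Equiv.Perm (Fin n)) (y : Fin n → A), g (y ∘ π) = g y) (x : Fin n → A) :
    ∑ y, W x y * g y
      ≤ ((n : ℝ) + 1) ^ (Fintype.card A * (Fintype.card A - 1)) *
          ∑ y, Astar dn Δ x y * g y := by
  refine (sum_mul_le_of_InC hW x fun y hy =>
    le_numCondTypes_mul_sum_Astar_mul hdperm hg0 hg hy).trans ?_
  gcongr
  · exact sum_nonneg fun y _ => mul_nonneg (Astar_nonneg x y) (hg0 y)
  · exact_mod_cast numCondTypes_le dn Δ x

theorem sum_sum_mul_le_pow_mul_sum_sum_Astar_mul [Nonempty A]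
    (hdperm : ∀ (π : Equiv.Perm (Fin n)) (x y : Fin n → A), dn (x ∘ π) (y ∘ π) = dn x y)
    {W : (Fin n → A) → (Fin n → A) → ℝ} (hW : InC dn Δ W)
    {p : (Fin n → A) → ℝ} (hp : ∀ x, 0 ≤ p x) {g : (Fin n → A) → ℝ} (hg0 : ∀ y, 0 ≤ g y)
    (hg : ∀ (π : Equiv.Perm (Fin n)) (y : Fin n → A), g (y ∘ π) = g y) :
    ∑ x, ∑ y, p x * W x y * g y
      ≤ ((n : ℝ) + 1) ^ (Fintype.card A * (Fintype.card A - 1)) *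
          ∑ x, ∑ y, p x * Astar dn Δ x y * g y := by
  calc ∑ x, ∑ y, p x * W x y * g y = ∑ x, p x * ∑ y, W x y * g y := by
        simp only [mul_assoc, mul_sum]
    _ ≤ ∑ x, p x * (((n : ℝ) + 1) ^ (Fintype.card A * (Fintype.card A - 1)) *
          ∑ y, Astar dn Δ x y * g y) := sum_le_sum fun x _ =>
        mul_le_mul_of_nonneg_left (sum_mul_le_pow_mul_sum_Astar_mul hdperm hW hg0 hg x) (hp x)
    _ = _ := by
        simp only [mul_sum]
        exact sum_congr rfl fun x _ => sum_congr rfl fun y _ => by ring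

end Attack

theorem dominant_attack_general
    {A : Type} [Fintype A] [DecidableEq A] [Nonempty A] {n : ℕ}
    (dn : (Fin n → A) → (Fin n → A) → ℝ)
    (hdperm : ∀ (π : Equiv.Perm (Fin n)) (x y : Fin n → A), dn (x ∘ π) (y ∘ π) = dn x y)
    (P0 P1 : A → ℝ) (hP0 : IsPMF P0) (hP1 : IsPMF P1)
    (Δ0 Δ1 : ℝ)
    (γ β : ℝ) (hγ : 0 ≤ γ) (hβ : 0 ≤ β)
    (Φ : (Fin n → A) → ℝ) (hΦrange : ∀ y, Φ y ∈ Set.Icc (0 : ℝ) 1)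
    (hΦinv : ∀ (π : Equiv.Perm (Fin n)) (y : Fin n → A), Φ (y ∘ π) = Φ y)
    (A0 A1 : (Fin n → A) → (Fin n → A) → ℝ)
    (hA0 : InC dn Δ0 A0) (hA1 : InC dn Δ1 A1) :
    γ * PFN P1 Φ A1 + β * PFP P0 Φ A0
      ≤ ((n : ℝ) + 1) ^ (Fintype.card A * (Fintype.card A - 1)) *
          (γ * PFN P1 Φ (Astar dn Δ1) + β * PFP P0 Φ (Astar dn Δ0)) := by
  set K : ℝ := ((n : ℝ) + 1) ^ (Fintype.card A * (Fintype.card A - 1))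
  have hFN : PFN P1 Φ A1 ≤ K * PFN P1 Φ (Astar dn Δ1) :=
    sum_sum_mul_le_pow_mul_sum_sum_Astar_mul hdperm hA1 (seqProb_nonneg hP1)
      (fun y => sub_nonneg.2 (hΦrange y).2) fun π y => by rw [hΦinv]
  have hFP : PFP P0 Φ A0 ≤ K * PFP P0 Φ (Astar dn Δ0) :=
    sum_sum_mul_le_pow_mul_sum_sum_Astar_mul hdperm hA0 (seqProb_nonneg hP0)
      (fun y => (hΦrange y).1) hΦinv
  calc γ * PFN P1 Φ A1 + β * PFP P0 Φ A0
      ≤ γ * (K * PFN P1 Φ (Astar dn Δ1)) + β * (K * PFP P0 Φ (Astar dn Δ0)) := by gcongr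
    _ = K * (γ * PFN P1 Φ (Astar dn Δ1) + β * PFP P0 Φ (Astar dn Δ0)) := by ring

/-- Theorem 1: dominance of the uniform-on-conditional-type-classes
attack channels `A*_{Δ₀}, A*_{Δ₁}`. -/
theorem dominant_attack
    {A : Type} [Fintype A] [DecidableEq A] [Nonempty A] {n : ℕ} (hn : 1 ≤ n)
    (dn : (Fin n → A) → (Fin n → A) → ℝ)
    (hdnn : ∀ x y, 0 ≤ dn x y)
    (hdperm : ∀ (π : Equiv.Perm (Fin n)) (x y : Fin n → A), dn (x ∘ π) (y ∘ π) = dn x y)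
    (P0 P1 : A → ℝ) (hP0 : IsPMF P0) (hP1 : IsPMF P1)
    (Δ0 Δ1 : ℝ) (hΔ0 : 0 ≤ Δ0) (hΔ1 : 0 ≤ Δ1)
    (γ β : ℝ) (hγ : 0 ≤ γ) (hβ : 0 ≤ β)
    (Φ : (Fin n → A) → ℝ) (hΦrange : ∀ y, Φ y ∈ Set.Icc (0 : ℝ) 1)
    (hΦinv : ∀ (π : Equiv.Perm (Fin n)) (y : Fin n → A), Φ (y ∘ π) = Φ y)
    (A0 A1 : (Fin n → A) → (Fin n → A) → ℝ)
    (hA0 : InC dn Δ0 A0) (hA1 : InC dn Δ1 A1) :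
    γ * PFN P1 Φ A1 + β * PFP P0 Φ A0
      ≤ ((n : ℝ) + 1) ^ (Fintype.card A * (Fintype.card A - 1)) *
          (γ * PFN P1 Φ (Astar dn Δ1) + β * PFP P0 Φ (Astar dn Δ0)) :=
  dominant_attack_general dn hdperm P0 P1 hP0 hP1 Δ0 Δ1 γ β hγ hβ Φ hΦrange hΦinv A0 A1 hA0 hA1
end
end

section
/- (Lemma 1, part (a): pointwise bound on admissible Neyman–Pearson defence rules.) Let A be a nonempty finite set, n ≥ 1, d_n : A^n × A^n → ℝ nonnegative and permutation-invariant with d_n(y,y) = 0 for all y, P_0 a strictly positive PMF on A, Δ_0 ≥ 0 and λ > 0. Suppose Φ : A^n → [0,1] is permutation-invariant and satisfies P_FP(Φ,A) ≤ e^{−nλ} for every channel A ∈ C_{Δ_0}. Then for every y ∈ A^n, Φ(y) ≤ (n+1)^{|A|²·(|A|−1)} · exp( −n·( λ − min_{x ∈ A^n : d_n(x,y) ≤ nΔ_0} D(P̂_x ‖ P_0) ) ). -/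
open scoped Classical
open Finset Filter

noncomputable section

/-!
Fix `y` and an admissible `x`, i.e. `dn x y ≤ n Δ₀`. The attack that sends each rearrangement
`x ∘ σ` of `x` to `y ∘ σ` and leaves every other sequence in place lies in `C_{Δ₀}`, because `dn`
is permutation invariant and vanishes on the diagonal. As `Φ` and `P₀ⁿ` are permutation
invariant too, its false-positive probability is at least `P₀ⁿ(T(x)) · Φ(y)`, where `T(x)` is
the type class of `x`. The method of types bounds
`P₀ⁿ(T(x)) ≥ (n + 1)^{-(|A| - 1)} e^{-n D(P̂ₓ‖P₀)}`, and taking for `x` a minimiser of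
`D(P̂ₓ‖P₀)` gives the claim, as `|A| - 1 ≤ |A|² (|A| - 1)`.
-/
section LetterCount

open Nat

variable {ι A : Type*} [Fintype ι] [DecidableEq A]

def letterCount (x : ι → A) (a : A) : ℕ := #{i | x i = a}

def typeClass [DecidableEq ι] [Fintype A] (x : ι → A) : Finset (ι → A) :=
  {x' | letterCount x' = letterCount x}

lemma letterCount_eq_card_subtype (x : ι → A) (a : A) :
    letterCount x a = Fintype.card {i // x i = a} :=
  (Fintype.card_subtype _).symm

lemma sum_letterCount [Fintype A] (x : ι → A) : ∑ a, letterCount x a = Fintype.card ι := by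
  simp only [letterCount, ← card_eq_sum_card_fiberwise fun i _ => mem_univ (x i)]
  rfl

lemma letterCount_le (x : ι → A) (a : A) : letterCount x a ≤ Fintype.card ι :=
  card_filter_le _ _

lemma letterCount_eq_iff [DecidableEq ι] {x x' : ι → A} :
    letterCount x' = letterCount x ↔ ∃ σ : Equiv.Perm ι, x' = x ∘ σ := by
  constructor
  · intro h
    have e : ∀ a, {i // x' i = a} ≃ {i // x i = a} := fun a =>
      Fintype.equivOfCardEq (by rw [← letterCount_eq_card_subtype, h, letterCount_eq_card_subtype])
    exact ⟨Equiv.ofFiberEquiv e, funext fun i => (Equiv.ofFiberEquiv_map e i).symm⟩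
  · rintro ⟨σ, rfl⟩
    funext a
    simp only [letterCount_eq_card_subtype]
    exact Fintype.card_congr (σ.subtypeEquiv fun _ => Iff.rfl)

lemma mem_typeClass [DecidableEq ι] [Fintype A] {x x' : ι → A} :
    x' ∈ typeClass x ↔ ∃ σ : Equiv.Perm ι, x' = x ∘ σ := by
  simp [typeClass, letterCount_eq_iff]

lemma prod_apply_eq_prod_pow_letterCount [Fintype A] {M : Type*} [CommMonoid M] (x : ι → A)
    (h : A → M) :
    ∏ i, h (x i) = ∏ a, h a ^ letterCount x a := by
  rw [← prod_fiberwise' univ x h]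
  exact prod_congr rfl fun a _ => prod_const _

lemma card_typeClass_mul_prod_factorial [DecidableEq ι] [Fintype A] (x : ι → A) :
    #(typeClass x) * ∏ a, (letterCount x a)! = (Fintype.card ι)! := by
  have horbit : MulAction.orbit (Equiv.Perm ι)ᵈᵐᵃ x = typeClass x := by
    ext x'
    rw [MulAction.mem_orbit_iff, mem_coe, mem_typeClass]
    constructor
    · rintro ⟨g, rfl⟩
      exact ⟨DomMulAct.mk.symm g, rfl⟩
    · rintro ⟨σ, rfl⟩
      exact ⟨DomMulAct.mk σ, rfl⟩
  have hstab : Nat.card (MulAction.stabilizer (Equiv.Perm ι)ᵈᵐᵃ x) = ∏ a, (letterCount x a)! := by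
    simp only [letterCount_eq_card_subtype]
    rw [← DomMulAct.stabilizer_card, ← Nat.card_eq_fintype_card]
    exact Nat.card_congr (Equiv.subtypeEquiv DomMulAct.mk.symm fun _ => Iff.rfl)
  calc #(typeClass x) * ∏ a, (letterCount x a)!
      = (MulAction.orbit (Equiv.Perm ι)ᵈᵐᵃ x).ncard *
          Nat.card (MulAction.stabilizer (Equiv.Perm ι)ᵈᵐᵃ x) := by
        rw [horbit, Set.ncard_coe_finset, hstab]
    _ = Nat.card (Equiv.Perm ι)ᵈᵐᵃ := by
        rw [mul_comm, ← MulAction.index_stabilizer, Subgroup.card_mul_index]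
    _ = (Fintype.card ι)! := by
        rw [Nat.card_congr DomMulAct.mk.symm, Nat.card_eq_fintype_card, Fintype.card_perm]

end LetterCount

open Nat in
lemma Nat.factorial_mul_pow_le_factorial_mul_pow (c k : ℕ) : c ! * c ^ k ≤ k ! * c ^ c := by
  rcases le_total k c with hkc | hck
  · calc c ! * c ^ k = k ! * c.descFactorial (c - k) * c ^ k := by
          nth_rw 1 [← Nat.factorial_mul_descFactorial (Nat.sub_le c k), Nat.sub_sub_self hkc]
      _ ≤ k ! * c ^ (c - k) * c ^ k := by gcongr; exact c.descFactorial_le_pow _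
      _ = k ! * c ^ c := by rw [mul_assoc, ← pow_add, Nat.sub_add_cancel hkc]
  · calc c ! * c ^ k = c ! * c ^ (k - c) * c ^ c := by
          rw [mul_assoc, ← pow_add, Nat.sub_add_cancel hck]
      _ ≤ k ! * c ^ c := by gcongr; exact Nat.factorial_mul_pow_sub_le_factorial hck

section TypeCounting

open Nat

variable {ι A : Type*} [Fintype ι] [DecidableEq ι] [Fintype A] [DecidableEq A]

lemma card_image_letterCount_le [Nonempty A] :
    #(univ.image (letterCount : (ι → A) → A → ℕ))
      ≤ (Fintype.card ι + 1) ^ (Fintype.card A - 1) := by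
  obtain ⟨a₀⟩ := ‹Nonempty A›
  -- a count vector is determined by its values off `a₀`, as they sum to `card ι`
  have hmaps : ∀ t ∈ univ.image (letterCount : (ι → A) → A → ℕ),
      (fun b : {a // a ≠ a₀} => t b) ∈ Fintype.piFinset fun _ => range (Fintype.card ι + 1) := by
    simp only [mem_image, mem_univ, true_and, forall_exists_index, forall_apply_eq_imp_iff,
      Fintype.mem_piFinset, mem_range, Nat.lt_succ_iff]
    exact fun x b => letterCount_le x b
  have hinj : Set.InjOn (fun (t : A → ℕ) (b : {a // a ≠ a₀}) => t b)
      (univ.image (letterCount : (ι → A) → A → ℕ)) := by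
    simp only [Set.InjOn, coe_image, coe_univ, Set.image_univ, Set.mem_range,
      forall_exists_index, forall_apply_eq_imp_iff]
    intro x x' h
    funext a
    by_cases ha : a = a₀
    · subst ha
      have hx := sum_letterCount x
      have hx' := sum_letterCount x'
      rw [← add_sum_erase _ _ (mem_univ a)] at hx hx'
      have : ∑ b ∈ univ.erase a, letterCount x b = ∑ b ∈ univ.erase a, letterCount x' b :=
        sum_congr rfl fun b hb => congrFun h ⟨b, ne_of_mem_erase hb⟩
      omega
    · exact congrFun h ⟨a, ha⟩
  calc _ ≤ #(Fintype.piFinset fun _ : {a // a ≠ a₀} => range (Fintype.card ι + 1)) :=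
        card_le_card_of_injOn _ hmaps hinj
    _ = _ := by simp [Fintype.card_subtype_compl]

-- The type class of `x` is the most likely type class under the i.i.d. law with the letter
-- frequencies of `x`.
lemma card_typeClass_mul_prod_pow_le (x x' : ι → A) :
    #(typeClass x') * ∏ a, letterCount x a ^ letterCount x' a
      ≤ #(typeClass x) * ∏ a, letterCount x a ^ letterCount x a := by
  set c := letterCount x
  set c' := letterCount x'
  have hpos : 0 < ∏ a, (c' a)! * (c a)! := prod_pos fun a _ => by positivity
  refine Nat.le_of_mul_le_mul_right ?_ hpos
  calc #(typeClass x') * (∏ a, c a ^ c' a) * ∏ a, (c' a)! * (c a)!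
      = (#(typeClass x') * ∏ a, (c' a)!) * ∏ a, (c a)! * c a ^ c' a := by
        simp only [prod_mul_distrib]; ring
    _ ≤ (#(typeClass x) * ∏ a, (c a)!) * ∏ a, (c' a)! * c a ^ c a := by
        rw [card_typeClass_mul_prod_factorial, card_typeClass_mul_prod_factorial]
        exact Nat.mul_le_mul_left _ (prod_le_prod' fun a _ =>
          Nat.factorial_mul_pow_le_factorial_mul_pow _ _)
    _ = #(typeClass x) * (∏ a, c a ^ c a) * ∏ a, (c' a)! * (c a)! := by
        simp only [prod_mul_distrib]; ring

lemma pow_card_le_mul_card_typeClass_mul_prod_pow [Nonempty A] (x : ι → A) :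
    Fintype.card ι ^ Fintype.card ι ≤ (Fintype.card ι + 1) ^ (Fintype.card A - 1) *
      (#(typeClass x) * ∏ a, letterCount x a ^ letterCount x a) := by
  set c := letterCount x
  calc Fintype.card ι ^ Fintype.card ι
      = ∏ _i : ι, ∑ a, c a := by rw [prod_const, Finset.card_univ, sum_letterCount]
    _ = ∑ x' : ι → A, ∏ a, c a ^ letterCount x' a := by
        rw [Fintype.prod_sum]
        exact sum_congr rfl fun x' _ => prod_apply_eq_prod_pow_letterCount x' c
    _ = ∑ t ∈ univ.image letterCount, #{x' : ι → A | letterCount x' = t} * ∏ a, c a ^ t a := by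
        rw [sum_comp (fun t : A → ℕ => ∏ a, c a ^ t a) letterCount]
        rfl
    _ ≤ #(univ.image (letterCount : (ι → A) → A → ℕ)) * (#(typeClass x) * ∏ a, c a ^ c a) := by
        refine sum_le_card_nsmul _ _ _ fun t ht => ?_
        obtain ⟨x', -, rfl⟩ := mem_image.1 ht
        exact card_typeClass_mul_prod_pow_le x x'
    _ ≤ _ := by gcongr; exact card_image_letterCount_le

end TypeCounting

section MethodOfTypes

variable {A : Type} [Fintype A] [DecidableEq A] {n : ℕ}

lemma seqProb_eq_prod_pow (P : A → ℝ) (x : Fin n → A) :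
    seqProb P x = ∏ a, P a ^ letterCount x a :=
  prod_apply_eq_prod_pow_letterCount x P

lemma exp_neg_mul_klDiv_empP_mul_prod_pow {P : A → ℝ} (hP : ∀ a, 0 < P a) (x : Fin n → A) :
    Real.exp (-n * klDiv (empP x) P) * ∏ a, (letterCount x a : ℝ) ^ letterCount x a
      = n ^ n * seqProb P x := by
  have hletter : ∀ a, Real.exp (-n * if 0 < empP x a then empP x a * Real.log (empP x a / P a)
        else 0) * (letterCount x a : ℝ) ^ letterCount x a
      = (n : ℝ) ^ letterCount x a * P a ^ letterCount x a := by
    intro a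
    set c := letterCount x a
    have hemp : empP x a = c / n := rfl
    rcases Nat.eq_zero_or_pos c with hc | hc
    · simp [hemp, hc]
    have hn : (0 : ℝ) < n := by
      have := letterCount_le x a
      rw [Fintype.card_fin] at this
      exact_mod_cast hc.trans_le this
    have hcR : (0 : ℝ) < c := by exact_mod_cast hc
    have hpos : 0 < empP x a := by rw [hemp]; positivity
    rw [if_pos hpos, hemp, ← mul_pow]
    have : -(n : ℝ) * (c / n * Real.log (c / n / P a)) = c * Real.log (n * P a / c) := by
      rw [← neg_neg (Real.log (c / n / P a)), ← Real.log_inv, inv_div, div_div_eq_mul_div]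
      field_simp
    rw [this, Real.exp_nat_mul, Real.exp_log (by have := hP a; positivity), ← mul_pow]
    field_simp
  have hn : (n : ℝ) ^ n = ∏ a, (n : ℝ) ^ letterCount x a := by
    rw [prod_pow_eq_pow_sum, sum_letterCount, Fintype.card_fin]
  rw [klDiv, mul_sum, Real.exp_sum, ← prod_mul_distrib, prod_congr rfl fun a _ => hletter a,
    prod_mul_distrib, hn, seqProb_eq_prod_pow]

lemma exp_neg_mul_klDiv_empP_le [Nonempty A] {P : A → ℝ} (hP : ∀ a, 0 < P a) (x : Fin n → A) :
    Real.exp (-n * klDiv (empP x) P)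
      ≤ (n + 1) ^ (Fintype.card A - 1) * (#(typeClass x) * seqProb P x) := by
  have hcount : (n : ℝ) ^ n ≤ (n + 1) ^ (Fintype.card A - 1) *
      (#(typeClass x) * ∏ a, (letterCount x a : ℝ) ^ letterCount x a) := by
    have := pow_card_le_mul_card_typeClass_mul_prod_pow x
    rw [Fintype.card_fin] at this
    exact_mod_cast this
  set Z := ∏ a, (letterCount x a : ℝ) ^ letterCount x a
  have hZ : 0 < Z := prod_pos fun a _ => by
    rcases (letterCount x a).eq_zero_or_pos with h | h
    · simp [h]
    · positivity
  have hseq : 0 ≤ seqProb P x := prod_nonneg fun i _ => (hP (x i)).le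
  refine le_of_mul_le_mul_right ?_ hZ
  calc Real.exp (-n * klDiv (empP x) P) * Z = n ^ n * seqProb P x :=
        exp_neg_mul_klDiv_empP_mul_prod_pow hP x
    _ ≤ (n + 1) ^ (Fintype.card A - 1) * (#(typeClass x) * Z) * seqProb P x := by gcongr
    _ = _ := by ring

end MethodOfTypes

section Channels

variable {A : Type} [Fintype A] [DecidableEq A] {n : ℕ}

def detChannel {X : Type*} [DecidableEq X] (f : X → X) (x y : X) : ℝ := if y = f x then 1 else 0

lemma inC_detChannel {dn : (Fin n → A) → (Fin n → A) → ℝ} {Δ : ℝ} {f : (Fin n → A) → Fin n → A}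
    (hf : ∀ x, dn x (f x) ≤ n * Δ) : InC dn Δ (detChannel f) := by
  refine ⟨⟨fun x y => ?_, fun x => by simp [detChannel]⟩, fun x y hxy => ?_⟩
  · unfold detChannel
    split_ifs <;> norm_num
  · rw [detChannel, if_neg]
    rintro rfl
    exact (hf x).not_gt hxy

lemma pfp_detChannel (P0 : A → ℝ) (Φ : (Fin n → A) → ℝ) (f : (Fin n → A) → Fin n → A) :
    PFP P0 Φ (detChannel f) = ∑ x, seqProb P0 x * Φ (f x) := by
  simp [PFP, detChannel]

end Channels

section OrbitTransport

variable {ι A : Type*}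

def orbitTransport (x₀ y x : ι → A) : ι → A :=
  if h : ∃ σ : Equiv.Perm ι, x = x₀ ∘ σ then y ∘ h.choose else x

lemma exists_orbitTransport_eq {x₀ y x : ι → A} (h : ∃ σ : Equiv.Perm ι, x = x₀ ∘ σ) :
    ∃ σ : Equiv.Perm ι, x = x₀ ∘ σ ∧ orbitTransport x₀ y x = y ∘ σ :=
  ⟨h.choose, h.choose_spec, dif_pos h⟩

lemma orbitTransport_of_not_exists {x₀ y x : ι → A} (h : ¬∃ σ : Equiv.Perm ι, x = x₀ ∘ σ) :
    orbitTransport x₀ y x = x :=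
  dif_neg h

lemma dist_orbitTransport_le {d : (ι → A) → (ι → A) → ℝ}
    (hdperm : ∀ (σ : Equiv.Perm ι) (x y : ι → A), d (x ∘ σ) (y ∘ σ) = d x y)
    (hdrefl : ∀ y, d y y = 0) {r : ℝ} (hr : 0 ≤ r) {x₀ y : ι → A} (hx₀ : d x₀ y ≤ r)
    (x : ι → A) : d x (orbitTransport x₀ y x) ≤ r := by
  by_cases h : ∃ σ : Equiv.Perm ι, x = x₀ ∘ σ
  · obtain ⟨σ, rfl, hσ⟩ := exists_orbitTransport_eq (y := y) h
    rwa [hσ, hdperm]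
  · rwa [orbitTransport_of_not_exists h, hdrefl]

end OrbitTransport

lemma seqProb_comp_perm {A : Type} {n : ℕ} (P : A → ℝ) (x : Fin n → A)
    (σ : Equiv.Perm (Fin n)) : seqProb P (x ∘ σ) = seqProb P x :=
  Equiv.prod_comp σ fun i => P (x i)

lemma card_typeClass_mul_le_pfp_orbitTransport {A : Type} [Fintype A] [DecidableEq A] {n : ℕ}
    {P0 : A → ℝ} (hP0 : ∀ a, 0 ≤ P0 a) {Φ : (Fin n → A) → ℝ} (hΦ : ∀ y, 0 ≤ Φ y)
    (hΦinv : ∀ (π : Equiv.Perm (Fin n)) (y : Fin n → A), Φ (y ∘ π) = Φ y) (x₀ y : Fin n → A) :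
    #(typeClass x₀) * seqProb P0 x₀ * Φ y ≤ PFP P0 Φ (detChannel (orbitTransport x₀ y)) := by
  rw [pfp_detChannel]
  calc #(typeClass x₀) * seqProb P0 x₀ * Φ y
      = ∑ x ∈ typeClass x₀, seqProb P0 x * Φ (orbitTransport x₀ y x) := by
        rw [mul_assoc, ← nsmul_eq_mul, ← sum_const]
        refine sum_congr rfl fun x hx => ?_
        obtain ⟨σ, rfl, hσ⟩ := exists_orbitTransport_eq (y := y) (mem_typeClass.1 hx)
        rw [hσ, seqProb_comp_perm, hΦinv]
    _ ≤ ∑ x, seqProb P0 x * Φ (orbitTransport x₀ y x) :=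
        sum_le_sum_of_subset_of_nonneg (subset_univ _) fun x _ _ =>
          mul_nonneg (prod_nonneg fun i _ => hP0 (x i)) (hΦ _)

lemma le_pow_mul_exp_of_forall_pfp_le {A : Type} [Fintype A] [DecidableEq A] [Nonempty A]
    {n : ℕ}
    {dn : (Fin n → A) → (Fin n → A) → ℝ}
    (hdperm : ∀ (π : Equiv.Perm (Fin n)) (x y : Fin n → A), dn (x ∘ π) (y ∘ π) = dn x y)
    (hdrefl : ∀ y, dn y y = 0) {P0 : A → ℝ} (hP0pos : ∀ a, 0 < P0 a) {Δ0 lam : ℝ}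
    (hΔ0 : 0 ≤ Δ0) {Φ : (Fin n → A) → ℝ} (hΦ : ∀ y, 0 ≤ Φ y)
    (hΦinv : ∀ (π : Equiv.Perm (Fin n)) (y : Fin n → A), Φ (y ∘ π) = Φ y)
    (hFP : ∀ W, InC dn Δ0 W → PFP P0 Φ W ≤ Real.exp (-(n : ℝ) * lam))
    {x y : Fin n → A} (hxy : dn x y ≤ n * Δ0) :
    Φ y ≤ ((n : ℝ) + 1) ^ (Fintype.card A - 1) * Real.exp (-n * (lam - klDiv (empP x) P0)) := by
  set K : ℝ := ((n : ℝ) + 1) ^ (Fintype.card A - 1)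
  set D := klDiv (empP x) P0
  have hW : InC dn Δ0 (detChannel (orbitTransport x y)) :=
    inC_detChannel (dist_orbitTransport_le hdperm hdrefl (by positivity) hxy)
  have hclass : #(typeClass x) * seqProb P0 x * Φ y ≤ Real.exp (-n * lam) :=
    (card_typeClass_mul_le_pfp_orbitTransport (fun a => (hP0pos a).le) hΦ hΦinv x y).trans
      (hFP _ hW)
  have hscaled : Real.exp (-n * D) * Φ y ≤ K * Real.exp (-n * lam) :=
    calc Real.exp (-n * D) * Φ y ≤ K * (#(typeClass x) * seqProb P0 x) * Φ y :=
          mul_le_mul_of_nonneg_right (exp_neg_mul_klDiv_empP_le hP0pos x) (hΦ y)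
      _ = K * (#(typeClass x) * seqProb P0 x * Φ y) := by ring
      _ ≤ K * Real.exp (-n * lam) := by gcongr
  calc Φ y = Real.exp (-n * D) * Φ y * Real.exp (n * D) := by
        rw [mul_right_comm, ← Real.exp_add]; simp
    _ ≤ K * Real.exp (-n * lam) * Real.exp (n * D) := by gcongr
    _ = K * Real.exp (-n * (lam - D)) := by rw [mul_assoc, ← Real.exp_add]; ring_nf

theorem np_defence_pointwise_bound_general
    {A : Type} [Fintype A] [DecidableEq A] [Nonempty A] {n : ℕ}
    (dn : (Fin n → A) → (Fin n → A) → ℝ)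
    (hdperm : ∀ (π : Equiv.Perm (Fin n)) (x y : Fin n → A), dn (x ∘ π) (y ∘ π) = dn x y)
    (hdrefl : ∀ y, dn y y = 0)
    (P0 : A → ℝ) (hP0pos : ∀ a, 0 < P0 a)
    (Δ0 lam : ℝ) (hΔ0 : 0 ≤ Δ0)
    (Φ : (Fin n → A) → ℝ) (hΦrange : ∀ y, Φ y ∈ Set.Icc (0 : ℝ) 1)
    (hΦinv : ∀ (π : Equiv.Perm (Fin n)) (y : Fin n → A), Φ (y ∘ π) = Φ y)
    (hFP : ∀ W, InC dn Δ0 W → PFP P0 Φ W ≤ Real.exp (-(n : ℝ) * lam)) :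
    ∀ y : Fin n → A,
      Φ y ≤ ((n : ℝ) + 1) ^ (Fintype.card A ^ 2 * (Fintype.card A - 1)) *
        Real.exp (-(n : ℝ) *
          (lam - sInf {v | ∃ x : Fin n → A,
            dn x y ≤ (n : ℝ) * Δ0 ∧ v = klDiv (empP x) P0})) := by
  intro y
  set S := {v | ∃ x : Fin n → A, dn x y ≤ (n : ℝ) * Δ0 ∧ v = klDiv (empP x) P0}
  have hS : S.Nonempty := ⟨_, y, by rw [hdrefl]; positivity, rfl⟩
  have hSfin : S.Finite := (Set.finite_range fun x : Fin n → A => klDiv (empP x) P0).subset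
    (by rintro _ ⟨x, -, rfl⟩; exact ⟨x, rfl⟩)
  obtain ⟨x, hxy, hx⟩ := hS.csInf_mem hSfin
  rw [hx]
  refine (le_pow_mul_exp_of_forall_pfp_le hdperm hdrefl hP0pos hΔ0 (fun y => (hΦrange y).1)
    hΦinv hFP hxy).trans ?_
  gcongr
  · exact le_add_of_nonneg_left n.cast_nonneg
  · exact Nat.le_mul_of_pos_left _ (pow_pos Fintype.card_pos 2)

/-- Lemma 1, part (a): pointwise bound on admissible Neyman–Pearson
defence rules. -/
theorem np_defence_pointwise_bound
    {A : Type} [Fintype A] [DecidableEq A] [Nonempty A] {n : ℕ} (hn : 1 ≤ n)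
    (dn : (Fin n → A) → (Fin n → A) → ℝ)
    (hdnn : ∀ x y, 0 ≤ dn x y)
    (hdperm : ∀ (π : Equiv.Perm (Fin n)) (x y : Fin n → A), dn (x ∘ π) (y ∘ π) = dn x y)
    (hdrefl : ∀ y, dn y y = 0)
    (P0 : A → ℝ) (hP0 : IsPMF P0) (hP0pos : ∀ a, 0 < P0 a)
    (Δ0 lam : ℝ) (hΔ0 : 0 ≤ Δ0) (hlam : 0 < lam)
    (Φ : (Fin n → A) → ℝ) (hΦrange : ∀ y, Φ y ∈ Set.Icc (0 : ℝ) 1)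
    (hΦinv : ∀ (π : Equiv.Perm (Fin n)) (y : Fin n → A), Φ (y ∘ π) = Φ y)
    (hFP : ∀ W, InC dn Δ0 W → PFP P0 Φ W ≤ Real.exp (-(n : ℝ) * lam)) :
    ∀ y : Fin n → A,
      Φ y ≤ ((n : ℝ) + 1) ^ (Fintype.card A ^ 2 * (Fintype.card A - 1)) *
        Real.exp (-(n : ℝ) *
          (lam - sInf {v | ∃ x : Fin n → A,
            dn x y ≤ (n : ℝ) * Δ0 ∧ v = klDiv (empP x) P0})) :=
  np_defence_pointwise_bound_general dn hdperm hdrefl P0 hP0pos Δ0 lam hΔ0 Φ hΦrange hΦinv hFP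
end
end

section
/- (Theorem 4: the fully active exponent as a partially active exponent with summed distortion, metric case.) Let A be a nonempty finite set and let d : A × A → ℝ be a metric on A (nonnegative, d(a,b) = 0 iff a = b, symmetric, satisfying the triangle inequality). Let P_0, P_1 be strictly positive PMFs on A, and let λ, Δ_0, Δ_1 ≥ 0. Then min over PMFs P_Y with D̃_{Δ_0}(P_Y, P_0) ≤ λ of D̃_{Δ_1}(P_Y, P_1) equals min over PMFs P_Z with D(P_Z ‖ P_0) ≤ λ of D̃_{Δ_0 + Δ_1}(P_Z, P_1). -/
open scoped Classical
open Finset Filter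

noncomputable section

/-!
Both sides are minima of continuous functions over compact sets of couplings, so it suffices to
transport optimal couplings between the two problems. Given `PY` with optimal couplings `(X₀, Y)`
for budget `Δ0` and `(X₁, Y)` for budget `Δ1`, gluing them along `Y` and the triangle inequality
give a coupling of `(X₁, X₀)` of cost at most `Δ0 + Δ1`, so `PZ = P_{X₀}` does at least as well on
the right. Conversely, an optimal coupling of `(X, Z)` of cost `E ≤ Δ0 + Δ1` is split by letting
`Y` be `X` with probability `1 - t` and `Z` with probability `t`, where `t E ≤ Δ1` and
`(1 - t) E ≤ Δ0`; symmetry of `d` is what lets `(Z, Y)` inherit the cost of `(X, Z)`.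
-/

open Real

section Couplings

variable {A : Type} [Fintype A]

lemma sum_margX (Q : A × A → ℝ) : ∑ a, margX Q a = ∑ q, Q q :=
  (Fintype.sum_prod_type Q).symm

lemma sum_margY (Q : A × A → ℝ) : ∑ b, margY Q b = ∑ q, Q q := by
  rw [Fintype.sum_prod_type, Finset.sum_comm]
  rfl

lemma isPMF_margX {Q : A × A → ℝ} (hQ : IsPMF Q) : IsPMF (margX Q) :=
  ⟨fun _ => sum_nonneg fun _ _ => hQ.1 _, (sum_margX Q).trans hQ.2⟩

lemma isPMF_margY {Q : A × A → ℝ} (hQ : IsPMF Q) : IsPMF (margY Q) :=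
  ⟨fun _ => sum_nonneg fun _ _ => hQ.1 _, (sum_margY Q).trans hQ.2⟩

lemma IsPMF.convexComb {Q R : A → ℝ} (hQ : IsPMF Q) (hR : IsPMF R) {t : ℝ} (ht₀ : 0 ≤ t)
    (ht₁ : t ≤ 1) : IsPMF ((1 - t) • Q + t • R) :=
  convex_stdSimplex ℝ A hQ hR (sub_nonneg.2 ht₁) ht₀ (sub_add_cancel 1 t)

@[simp] lemma margX_add (Q R : A × A → ℝ) : margX (Q + R) = margX Q + margX R :=
  funext fun _ => sum_add_distrib

@[simp] lemma margY_add (Q R : A × A → ℝ) : margY (Q + R) = margY Q + margY R :=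
  funext fun _ => sum_add_distrib

@[simp] lemma margX_smul (c : ℝ) (Q : A × A → ℝ) : margX (c • Q) = c • margX Q :=
  funext fun _ => (mul_sum _ _ _).symm

@[simp] lemma margY_smul (c : ℝ) (Q : A × A → ℝ) : margY (c • Q) = c • margY Q :=
  funext fun _ => (mul_sum _ _ _).symm

@[simp] lemma expDist_add (d : A → A → ℝ) (Q R : A × A → ℝ) :
    expDist d (Q + R) = expDist d Q + expDist d R := by
  simp only [expDist, Pi.add_apply, add_mul, sum_add_distrib]

@[simp] lemma expDist_smul (d : A → A → ℝ) (c : ℝ) (Q : A × A → ℝ) :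
    expDist d (c • Q) = c * expDist d Q := by
  simp only [expDist, Pi.smul_apply, smul_eq_mul, mul_sum, mul_assoc]

def diagCoupling (P : A → ℝ) : A × A → ℝ := fun q => if q.1 = q.2 then P q.2 else 0

@[simp] lemma margX_diagCoupling (P : A → ℝ) : margX (diagCoupling P) = P :=
  funext fun a => by simp [margX, diagCoupling]

@[simp] lemma margY_diagCoupling (P : A → ℝ) : margY (diagCoupling P) = P :=
  funext fun b => by simp [margY, diagCoupling]

lemma isPMF_diagCoupling {P : A → ℝ} (hP : IsPMF P) : IsPMF (diagCoupling P) :=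
  ⟨fun q => by unfold diagCoupling; split_ifs; exacts [hP.1 _, le_rfl],
    by rw [← sum_margX, margX_diagCoupling, hP.2]⟩

lemma expDist_diagCoupling {d : A → A → ℝ} (hd : ∀ a, d a a = 0) (P : A → ℝ) :
    expDist d (diagCoupling P) = 0 :=
  sum_eq_zero fun q _ => by
    unfold diagCoupling; split_ifs with h
    · rw [h, hd, mul_zero]
    · rw [zero_mul]

@[simp] lemma margX_comp_swap (Q : A × A → ℝ) : margX (Q ∘ Prod.swap) = margY Q := rfl

@[simp] lemma margY_comp_swap (Q : A × A → ℝ) : margY (Q ∘ Prod.swap) = margX Q := rfl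

lemma isPMF_comp_swap {Q : A × A → ℝ} (hQ : IsPMF Q) : IsPMF (Q ∘ Prod.swap) :=
  ⟨fun _ => hQ.1 _, by rw [← sum_margX, margX_comp_swap, sum_margY, hQ.2]⟩

lemma expDist_comp_swap {d : A → A → ℝ} (hd : ∀ a b, d a b = d b a) (Q : A × A → ℝ) :
    expDist d (Q ∘ Prod.swap) = expDist d Q :=
  Fintype.sum_equiv (Equiv.prodComm A A) _ _ fun q => by simp [hd q.1 q.2]

end Couplings

section Gluing

variable {A : Type} [Fintype A]

/-- Gluing of couplings `Q` of `(X, Y)` and `R` of `(Y, Z)` along the marginal of `Y`: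
`X` and `Z` are made conditionally independent given `Y`. Terms with `margY Q y = 0` vanish
anyway, so the junk value of division by zero is harmless. -/
def glueCoupling (Q R : A × A → ℝ) : A × A → ℝ :=
  fun q => ∑ y, Q (q.1, y) * R (y, q.2) / margY Q y

variable {Q R : A × A → ℝ}

lemma eq_zero_of_margY_eq_zero (hQ : IsPMF Q) {y : A} (hy : margY Q y = 0) (x : A) :
    Q (x, y) = 0 :=
  (sum_eq_zero_iff_of_nonneg fun a _ => hQ.1 (a, y)).1 hy x (mem_univ x)

lemma eq_zero_of_margX_eq_zero (hQ : IsPMF Q) {x : A} (hx : margX Q x = 0) (y : A) :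
    Q (x, y) = 0 :=
  (sum_eq_zero_iff_of_nonneg fun b _ => hQ.1 (x, b)).1 hx y (mem_univ y)

lemma sum_glue_fst (hR : IsPMF R) (hQR : margY Q = margX R) (y z : A) :
    ∑ x, Q (x, y) * R (y, z) / margY Q y = R (y, z) := by
  rw [← sum_div, ← sum_mul]
  exact mul_div_cancel_left_of_imp fun h => eq_zero_of_margX_eq_zero hR (hQR ▸ h) z

lemma sum_glue_snd (hQ : IsPMF Q) (hQR : margY Q = margX R) (x y : A) :
    ∑ z, Q (x, y) * R (y, z) / margY Q y = Q (x, y) := by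
  rw [← sum_div, ← mul_sum]
  change Q (x, y) * margX R y / margY Q y = Q (x, y)
  rw [← hQR]
  exact mul_div_cancel_of_imp fun h => eq_zero_of_margY_eq_zero hQ h x

lemma margX_glueCoupling (hQ : IsPMF Q) (hQR : margY Q = margX R) :
    margX (glueCoupling Q R) = margX Q :=
  funext fun x => by
    simp only [margX, glueCoupling]
    rw [sum_comm]
    exact sum_congr rfl fun y _ => sum_glue_snd hQ hQR x y

lemma margY_glueCoupling (hR : IsPMF R) (hQR : margY Q = margX R) :
    margY (glueCoupling Q R) = margY R :=
  funext fun z => by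
    simp only [margY, glueCoupling]
    rw [sum_comm]
    exact sum_congr rfl fun y _ => sum_glue_fst hR hQR y z

lemma isPMF_glueCoupling (hQ : IsPMF Q) (hR : IsPMF R) (hQR : margY Q = margX R) :
    IsPMF (glueCoupling Q R) :=
  ⟨fun _ => sum_nonneg fun y _ => div_nonneg (mul_nonneg (hQ.1 _) (hR.1 _)) ((isPMF_margY hQ).1 y),
    by rw [← sum_margX, margX_glueCoupling hQ hQR, (isPMF_margX hQ).2]⟩

lemma expDist_glueCoupling_le {d : A → A → ℝ} (hd : ∀ a b c, d a c ≤ d a b + d b c)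
    (hQ : IsPMF Q) (hR : IsPMF R) (hQR : margY Q = margX R) :
    expDist d (glueCoupling Q R) ≤ expDist d Q + expDist d R := by
  set T : A → A → A → ℝ := fun x y z => Q (x, y) * R (y, z) / margY Q y
  have hT : ∀ x y z, 0 ≤ T x y z := fun x y z =>
    div_nonneg (mul_nonneg (hQ.1 _) (hR.1 _)) ((isPMF_margY hQ).1 y)
  calc expDist d (glueCoupling Q R) = ∑ x, ∑ z, ∑ y, T x y z * d x z := by
        simp only [expDist, glueCoupling, Fintype.sum_prod_type, sum_mul]
        rfl
    _ ≤ ∑ x, ∑ z, ∑ y, (T x y z * d x y + T x y z * d y z) := by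
        gcongr with x _ z _ y _
        rw [← mul_add]
        exact mul_le_mul_of_nonneg_left (hd x y z) (hT x y z)
    _ = ∑ x, ∑ y, (∑ z, T x y z) * d x y + ∑ y, ∑ z, (∑ x, T x y z) * d y z := by
        simp only [sum_add_distrib, sum_mul]
        congr 1
        · exact sum_congr rfl fun x _ => sum_comm
        · rw [sum_comm]
          refine (sum_congr rfl fun z _ => sum_comm).trans ?_
          rw [sum_comm]
    _ = expDist d Q + expDist d R := by
        simp only [T, sum_glue_fst hR hQR, sum_glue_snd hQ hQR, expDist, Fintype.sum_prod_type]

end Gluing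

section Dtilde

variable {A : Type} [Fintype A]

lemma klDiv_eq_sum_mul_log_div {Q : A → ℝ} (hQ : ∀ a, 0 ≤ Q a) (P : A → ℝ) :
    klDiv Q P = ∑ a, Q a * log (Q a / P a) :=
  sum_congr rfl fun a _ => by
    rcases (hQ a).lt_or_eq with h | h
    · rw [if_pos h]
    · simp [← h]

lemma continuous_mul_log_div {p : ℝ} (hp : p ≠ 0) : Continuous fun x : ℝ => x * log (x / p) := by
  have h : (fun x : ℝ => x * log (x / p)) = fun x => x * log x - x * log p := funext fun x => by
    rcases eq_or_ne x 0 with rfl | hx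
    · simp
    · rw [log_div hx hp, mul_sub]
  rw [h]
  exact continuous_mul_log.sub (continuous_id.mul continuous_const)

def admissibleCouplings (d : A → A → ℝ) (Δ : ℝ) (PY : A → ℝ) : Set (A × A → ℝ) :=
  {Q | IsPMF Q ∧ margY Q = PY ∧ expDist d Q ≤ Δ}

variable {d : A → A → ℝ} {Δ : ℝ} {PY P : A → ℝ}

lemma Dtilde_eq_sInf_image (d : A → A → ℝ) (Δ : ℝ) (PY P : A → ℝ) :
    Dtilde d Δ PY P = sInf ((fun Q => klDiv (margX Q) P) '' admissibleCouplings d Δ PY) := by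
  unfold Dtilde admissibleCouplings
  congr 1
  ext v
  simp only [Set.mem_ofPred_eq, Set.mem_image, and_assoc, eq_comm]

lemma isCompact_admissibleCouplings (d : A → A → ℝ) (Δ : ℝ) (PY : A → ℝ) :
    IsCompact (admissibleCouplings d Δ PY) := by
  have hmargY : Continuous (margY : (A × A → ℝ) → A → ℝ) := by unfold margY; fun_prop
  have hexpDist : Continuous (expDist d) := by unfold expDist; fun_prop
  exact ((isCompact_stdSimplex ℝ (A × A)).inter_right
    ((isClosed_eq hmargY continuous_const).inter (isClosed_le hexpDist continuous_const)))

lemma continuousOn_klDiv_margX (hP : ∀ a, P a ≠ 0) :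
    ContinuousOn (fun Q => klDiv (margX Q) P) (admissibleCouplings d Δ PY) := by
  have hmargX : Continuous (margX : (A × A → ℝ) → A → ℝ) := by unfold margX; fun_prop
  refine Continuous.continuousOn (f := fun Q => ∑ a, margX Q a * log (margX Q a / P a)) ?_
    |>.congr fun Q hQ => klDiv_eq_sum_mul_log_div (isPMF_margX hQ.1).1 P
  exact continuous_finsetSum _ fun a _ =>
    (continuous_mul_log_div (hP a)).comp ((continuous_apply a).comp hmargX)

lemma Dtilde_le_klDiv (hP : ∀ a, P a ≠ 0) {Q : A × A → ℝ}
    (hQ : Q ∈ admissibleCouplings d Δ PY) : Dtilde d Δ PY P ≤ klDiv (margX Q) P := by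
  rw [Dtilde_eq_sInf_image]
  exact csInf_le ((isCompact_admissibleCouplings d Δ PY).bddBelow_image
    (continuousOn_klDiv_margX hP)) (Set.mem_image_of_mem _ hQ)

lemma diagCoupling_mem_admissibleCouplings (hd : ∀ a, d a a = 0) (hΔ : 0 ≤ Δ) (hPY : IsPMF PY) :
    diagCoupling PY ∈ admissibleCouplings d Δ PY :=
  ⟨isPMF_diagCoupling hPY, margY_diagCoupling PY, (expDist_diagCoupling hd PY).trans_le hΔ⟩

lemma exists_klDiv_eq_Dtilde (hd : ∀ a, d a a = 0) (hΔ : 0 ≤ Δ) (hPY : IsPMF PY)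
    (hP : ∀ a, P a ≠ 0) :
    ∃ Q ∈ admissibleCouplings d Δ PY, klDiv (margX Q) P = Dtilde d Δ PY P := by
  obtain ⟨Q, hQ, h⟩ := (isCompact_admissibleCouplings d Δ PY).exists_sInf_image_eq
    ⟨_, diagCoupling_mem_admissibleCouplings hd hΔ hPY⟩ (continuousOn_klDiv_margX hP)
  exact ⟨Q, hQ, by rw [Dtilde_eq_sInf_image, h]⟩

end Dtilde

section Factorization

variable {A : Type} [Fintype A] {d : A → A → ℝ} {Δ₀ Δ₁ : ℝ}

lemma exists_glue_mem_admissibleCouplings (hd_symm : ∀ a b, d a b = d b a)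
    (hd_tri : ∀ a b c, d a c ≤ d a b + d b c) {PY : A → ℝ} {Q₀ Q₁ : A × A → ℝ}
    (hQ₀ : Q₀ ∈ admissibleCouplings d Δ₀ PY) (hQ₁ : Q₁ ∈ admissibleCouplings d Δ₁ PY) :
    ∃ Q ∈ admissibleCouplings d (Δ₀ + Δ₁) (margX Q₀), margX Q = margX Q₁ := by
  obtain ⟨hQ₀, hQ₀Y, hQ₀E⟩ := hQ₀
  obtain ⟨hQ₁, hQ₁Y, hQ₁E⟩ := hQ₁
  have hR := isPMF_comp_swap hQ₀
  have hglue : margY Q₁ = margX (Q₀ ∘ Prod.swap) := hQ₁Y.trans hQ₀Y.symm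
  refine ⟨glueCoupling Q₁ (Q₀ ∘ Prod.swap), ⟨isPMF_glueCoupling hQ₁ hR hglue,
    margY_glueCoupling hR hglue, ?_⟩, margX_glueCoupling hQ₁ hglue⟩
  calc expDist d (glueCoupling Q₁ (Q₀ ∘ Prod.swap))
      ≤ expDist d Q₁ + expDist d (Q₀ ∘ Prod.swap) := expDist_glueCoupling_le hd_tri hQ₁ hR hglue
    _ ≤ Δ₀ + Δ₁ := by rw [expDist_comp_swap hd_symm]; linarith

lemma exists_weight_split {E : ℝ} (hΔ₀ : 0 ≤ Δ₀) (hΔ₁ : 0 ≤ Δ₁) (hE : E ≤ Δ₀ + Δ₁) :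
    ∃ t : ℝ, 0 ≤ t ∧ t ≤ 1 ∧ t * E ≤ Δ₁ ∧ (1 - t) * E ≤ Δ₀ := by
  rcases (add_nonneg hΔ₀ hΔ₁).eq_or_lt with hs | hs
  · exact ⟨1, zero_le_one, le_rfl, by linarith, by simp [hΔ₀]⟩
  refine ⟨Δ₁ / (Δ₀ + Δ₁), by positivity, (div_le_one hs).2 (by linarith), ?_, ?_⟩
  · calc Δ₁ / (Δ₀ + Δ₁) * E ≤ Δ₁ / (Δ₀ + Δ₁) * (Δ₀ + Δ₁) := by gcongr
      _ = Δ₁ := div_mul_cancel₀ _ hs.ne'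
  · calc (1 - Δ₁ / (Δ₀ + Δ₁)) * E = Δ₀ / (Δ₀ + Δ₁) * E := by field_simp; ring
      _ ≤ Δ₀ / (Δ₀ + Δ₁) * (Δ₀ + Δ₁) := by gcongr
      _ = Δ₀ := div_mul_cancel₀ _ hs.ne'

lemma exists_intermediate_of_mem_admissibleCouplings (hd : ∀ a, d a a = 0)
    (hd_symm : ∀ a b, d a b = d b a) (hΔ₀ : 0 ≤ Δ₀) (hΔ₁ : 0 ≤ Δ₁) {PZ : A → ℝ}
    {Q : A × A → ℝ} (hQ : Q ∈ admissibleCouplings d (Δ₀ + Δ₁) PZ) :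
    ∃ PY, IsPMF PY ∧ (∃ QXY ∈ admissibleCouplings d Δ₁ PY, margX QXY = margX Q) ∧
      ∃ QZY ∈ admissibleCouplings d Δ₀ PY, margX QZY = PZ := by
  obtain ⟨hQ, rfl, hE⟩ := hQ
  obtain ⟨t, ht₀, ht₁, hXY, hZY⟩ := exists_weight_split hΔ₀ hΔ₁ hE
  -- `Y` is `X` with probability `1 - t` and `Z` with probability `t`, so that `(X, Y)` costs
  -- `t * E` and `(Z, Y)` costs `(1 - t) * E`.
  have hQXY := (isPMF_diagCoupling (isPMF_margX hQ)).convexComb hQ ht₀ ht₁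
  have hQZY := (isPMF_comp_swap hQ).convexComb (isPMF_diagCoupling (isPMF_margY hQ)) ht₀ ht₁
  refine ⟨_, isPMF_margY hQXY, ⟨_, ⟨hQXY, rfl, ?_⟩, ?_⟩, _, ⟨hQZY, ?_, ?_⟩, ?_⟩
  · simpa [expDist_diagCoupling hd] using hXY
  · simp only [margX_add, margX_smul, margX_diagCoupling]
    module
  · simp
  · simpa [expDist_diagCoupling hd, expDist_comp_swap hd_symm] using hZY
  · simp only [margX_add, margX_smul, margX_comp_swap, margX_diagCoupling]
    module

end Factorization

theorem fully_active_eq_summed_metric_general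
    {A : Type} [Fintype A]
    (d : A → A → ℝ)
    (hdeq : ∀ a b, d a b = 0 ↔ a = b)
    (hdsymm : ∀ a b, d a b = d b a)
    (hdtri : ∀ a b c, d a c ≤ d a b + d b c)
    (P0 P1 : A → ℝ)
    (hP0pos : ∀ a, 0 < P0 a) (hP1pos : ∀ a, 0 < P1 a)
    (lam Δ0 Δ1 : ℝ) (hΔ0 : 0 ≤ Δ0) (hΔ1 : 0 ≤ Δ1) :
    sInf {v | ∃ PY : A → ℝ,
        IsPMF PY ∧ Dtilde d Δ0 PY P0 ≤ lam ∧ v = Dtilde d Δ1 PY P1}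
      = sInf {v | ∃ PZ : A → ℝ,
        IsPMF PZ ∧ klDiv PZ P0 ≤ lam ∧ v = Dtilde d (Δ0 + Δ1) PZ P1} := by
  have hd : ∀ a, d a a = 0 := fun a => (hdeq a a).2 rfl
  have hP0 : ∀ a, P0 a ≠ 0 := fun a => (hP0pos a).ne'
  have hP1 : ∀ a, P1 a ≠ 0 := fun a => (hP1pos a).ne'
  apply csInf_eq_csInf_of_forall_exists_le
  · rintro _ ⟨PY, hPY, hPYlam, rfl⟩
    obtain ⟨Q₀, hQ₀, hQ₀D⟩ := exists_klDiv_eq_Dtilde hd hΔ0 hPY hP0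
    obtain ⟨Q₁, hQ₁, hQ₁D⟩ := exists_klDiv_eq_Dtilde hd hΔ1 hPY hP1
    obtain ⟨Q, hQ, hQX⟩ := exists_glue_mem_admissibleCouplings hdsymm hdtri hQ₀ hQ₁
    refine ⟨_, ⟨margX Q₀, isPMF_margX hQ₀.1, hQ₀D ▸ hPYlam, rfl⟩, ?_⟩
    rw [← hQ₁D, ← hQX]
    exact Dtilde_le_klDiv hP1 hQ
  · rintro _ ⟨PZ, hPZ, hPZlam, rfl⟩
    obtain ⟨Q, hQ, hQD⟩ := exists_klDiv_eq_Dtilde hd (add_nonneg hΔ0 hΔ1) hPZ hP1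
    obtain ⟨PY, hPY, ⟨QXY, hQXY, hXY⟩, QZY, hQZY, hZY⟩ :=
      exists_intermediate_of_mem_admissibleCouplings hd hdsymm hΔ0 hΔ1 hQ
    refine ⟨_, ⟨PY, hPY, (Dtilde_le_klDiv hP0 hQZY).trans (hZY ▸ hPZlam), rfl⟩, ?_⟩
    rw [← hQD, ← hXY]
    exact Dtilde_le_klDiv hP1 hQXY

/-- Theorem 4: the fully active exponent as a partially active exponent
with summed distortion, metric case. -/
theorem fully_active_eq_summed_metric
    {A : Type} [Fintype A] [Nonempty A]
    (d : A → A → ℝ) (hd : ∀ a b, 0 ≤ d a b)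
    (hdeq : ∀ a b, d a b = 0 ↔ a = b)
    (hdsymm : ∀ a b, d a b = d b a)
    (hdtri : ∀ a b c, d a c ≤ d a b + d b c)
    (P0 P1 : A → ℝ) (hP0 : IsPMF P0) (hP1 : IsPMF P1)
    (hP0pos : ∀ a, 0 < P0 a) (hP1pos : ∀ a, 0 < P1 a)
    (lam Δ0 Δ1 : ℝ) (hlam : 0 ≤ lam) (hΔ0 : 0 ≤ Δ0) (hΔ1 : 0 ≤ Δ1) :
    sInf {v | ∃ PY : A → ℝ,
        IsPMF PY ∧ Dtilde d Δ0 PY P0 ≤ lam ∧ v = Dtilde d Δ1 PY P1}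
      = sInf {v | ∃ PZ : A → ℝ,
        IsPMF PZ ∧ klDiv PZ P0 ≤ lam ∧ v = Dtilde d (Δ0 + Δ1) PZ P1} :=
  fully_active_eq_summed_metric_general d hdeq hdsymm hdtri P0 P1 hP0pos hP1pos lam Δ0 Δ1 hΔ0 hΔ1
end
end
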